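/- Suppose ν is a symmetric Lévy measure on ℝ^d whose restriction to B(0,r₀) \ {0} is absolutely continuous with density ν̄, and there are constants m₁, m₂ > 0 and a nonincreasing function f : (0,r₀] → (0,∞) satisfying condition (A2) such that m₁ f(|x|) ≤ ν̄(x) ≤ m₂ f(|x|) for 0 < |x| < r₀. If κ = inf_{s ∈ (0,r₀]} f(s) > 0, then there exist constants 0 < c ≤ C such that c Ψ(1/|x|) / |x|^d ≤ ν̄(x) ≤ C Ψ(1/|x|) / |x|^d for all 0 < |x| < r₀. -/

import Mathlib

/-!
The estimate reduces to `Ψ(1/r) ≍ f(r) r^d` for `0 < r < r₀`.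

Lower bound: with `|e| = 1`, every `y` in `r • B((3/4) e, 1/4)` has `|y| < r` and
`⟨e/r, y⟩ ∈ (1/2, 1)`, so `1 - cos ⟨e/r, y⟩ ≥ 1/(2π²)` there, while `ν̄ ≥ m₁ f(r)` by monotonicity
of `f`; this set has volume `≍ r^d`, hence `Ψ(1/r) ≥ Φ(e/r) ≳ f(r) r^d`.

Upper bound: for `|ξ| ≤ 1/r`, `1 - cos ⟨ξ, y⟩ ≤ min(2, |y/r|²)`. Away from the punctured ball
`B(0, r₀) \ {0}` this is a multiple of `min(1, |y|²)`, whose `ν`-integral is finite, and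
`f(r) r^d ≥ M₁ f(r₀) r₀^d` by (A2) since `β₁ > d`. On the punctured ball, (A2) gives
`f(|y|) ≤ f(r) K(|y|/r)` with `K(t) = M₂ t^(-β₂) + M₁⁻¹ t^(-β₁)`, and the substitution `y = r z`
bounds the integral by `m₂ f(r) r^d ∫ min(2, |z|²) K(|z|) dz`; the last integral is finite
precisely because `d < β₁ ≤ β₂ < d + 2`.
-/

open MeasureTheory Real Set Metric Filter
open scoped ENNReal NNReal Topology

noncomputable section

variable {d : ℕ}

/-- Φ(ξ) = ∫ (1 − cos⟨ξ,y⟩) ν(dy). -/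
def levyPhi (ν : Measure (EuclideanSpace ℝ (Fin d))) (ξ : EuclideanSpace ℝ (Fin d)) : ℝ :=
  ∫ y, (1 - Real.cos (inner ℝ ξ y)) ∂ν

/-- Ψ(r) = sup_{|ξ| ≤ r} Φ(ξ). -/
def levyPsi (ν : Measure (EuclideanSpace ℝ (Fin d))) (r : ℝ) : ℝ :=
  sSup (levyPhi ν '' {ξ | ‖ξ‖ ≤ r})

/-- Ψ⁻¹(s) = sup {r > 0 : Ψ(r) = s}. -/
def levyPsiInv (ν : Measure (EuclideanSpace ℝ (Fin d))) (s : ℝ) : ℝ :=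
  sSup {r : ℝ | 0 < r ∧ levyPsi ν r = s}

/-- h(t) = 1 / Ψ⁻¹(1/t). -/
def levyh (ν : Measure (EuclideanSpace ℝ (Fin d))) (t : ℝ) : ℝ :=
  1 / levyPsiInv ν (1 / t)

/-- H(r) = ∫ min(1, r²|y|²) ν(dy). -/
def levyH (ν : Measure (EuclideanSpace ℝ (Fin d))) (r : ℝ) : ℝ :=
  (∫⁻ y, ENNReal.ofReal (min 1 (r ^ 2 * ‖y‖ ^ 2)) ∂ν).toReal

/-- A symmetric Lévy measure on ℝ^d with infinite total mass. -/
structure IsSymLevy (ν : Measure (EuclideanSpace ℝ (Fin d))) : Prop where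
  zero_singleton : ν {0} = 0
  levy_integral : (∫⁻ y, ENNReal.ofReal (min 1 (‖y‖ ^ 2)) ∂ν) < ⊤
  symm : ν.map (fun y => -y) = ν
  infinite : ν Set.univ = ⊤

/-- `P` is the convolution semigroup of probability measures with symbol Φ. -/
def IsLevySemigroup (ν : Measure (EuclideanSpace ℝ (Fin d)))
    (P : ℝ → Measure (EuclideanSpace ℝ (Fin d))) : Prop :=
  (∀ t : ℝ, 0 ≤ t → IsProbabilityMeasure (P t)) ∧
  (∀ t : ℝ, 0 ≤ t → ∀ ξ : EuclideanSpace ℝ (Fin d),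
    (∫ y, Complex.exp (Complex.I * Complex.ofReal (inner ℝ ξ y)) ∂(P t))
      = Complex.exp (Complex.ofReal (-(t * levyPhi ν ξ))))

/-- `p t` is a continuous density of `P t` with respect to Lebesgue measure. -/
def HasDensity (P : ℝ → Measure (EuclideanSpace ℝ (Fin d)))
    (p : ℝ → EuclideanSpace ℝ (Fin d) → ℝ) (t : ℝ) : Prop :=
  Continuous (p t) ∧ P t = volume.withDensity (fun x => ENNReal.ofReal (p t x))

/-- Condition (A1) with parameter `tp`. -/
def CondA1 (ν : Measure (EuclideanSpace ℝ (Fin d))) (tp : ℝ≥0∞) : Prop :=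
  ∃ M₀ : ℝ, 0 < M₀ ∧ ∀ t : ℝ, 0 < t → ENNReal.ofReal t < tp →
    (∫ ξ : EuclideanSpace ℝ (Fin d), Real.exp (-(t * levyPhi ν ξ)) * ‖ξ‖)
      ≤ M₀ * levyh ν t ^ (-(d : ℝ) - 1)

/-- Condition (A2) for a function `f` on `(0, r₀]`. -/
def CondA2 (d : ℕ) (f : ℝ → ℝ) (r₀ : ℝ) : Prop :=
  ∃ M₁ M₂ β₁ β₂ : ℝ, 0 < M₁ ∧ 0 < M₂ ∧ (d : ℝ) < β₁ ∧ β₁ ≤ β₂ ∧ β₂ < (d : ℝ) + 2 ∧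
    ∀ r R : ℝ, 0 < r → r ≤ R → R ≤ r₀ →
      M₁ * (R / r) ^ β₁ ≤ f r / f R ∧ f r / f R ≤ M₂ * (R / r) ^ β₂

/-- I(A) = ∫₀^∞ ∫_{S^{d-1}} 1_A(sθ) s^{-1-α}(1+s)^κ e^{-m s^β} ds μ(dθ). -/
def tempI (d : ℕ) (μ : Measure (EuclideanSpace ℝ (Fin d))) (α κ m β : ℝ)
    (A : Set (EuclideanSpace ℝ (Fin d))) : ℝ≥0∞ :=
  ∫⁻ θ, ∫⁻ s in Set.Ioi (0 : ℝ),
    A.indicator (fun _ => ENNReal.ofReal (s ^ (-1 - α) * (1 + s) ^ κ * Real.exp (-m * s ^ β)))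
      (s • θ) ∂volume ∂μ

lemma one_sub_cos_le_min_two_sq (t : ℝ) : 1 - cos t ≤ min 2 (t ^ 2) :=
  le_min (by linarith [neg_one_le_cos t])
    (by linarith [one_sub_sq_div_two_le_cos (x := t), sq_nonneg t])

lemma inv_two_mul_pi_sq_le_one_sub_cos {t : ℝ} (ht₁ : 1 / 2 ≤ |t|) (ht₂ : |t| ≤ 1) :
    1 / (2 * π ^ 2) ≤ 1 - cos t := by
  have hcos := cos_le_one_sub_mul_cos_sq (ht₂.trans (by linarith [pi_gt_three]))
  have ht : 1 / 4 ≤ t ^ 2 := by nlinarith [sq_abs t]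
  calc 1 / (2 * π ^ 2) = 2 / π ^ 2 * (1 / 4) := by field_simp; ring
    _ ≤ 2 / π ^ 2 * t ^ 2 := by gcongr
    _ ≤ 1 - cos t := by linarith

lemma norm_lt_one_and_half_lt_inner_of_mem_ball {F : Type*} [NormedAddCommGroup F]
    [InnerProductSpace ℝ F] {e z : F} (he : ‖e‖ = 1) (hz : z ∈ ball ((3 / 4 : ℝ) • e) (1 / 4)) :
    ‖z‖ < 1 ∧ 1 / 2 < inner ℝ e z := by
  rw [mem_ball, dist_eq_norm] at hz
  have h34 : ‖(3 / 4 : ℝ) • e‖ = 3 / 4 := by rw [norm_smul, he]; norm_num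
  have hinner : inner ℝ e z = 3 / 4 + inner ℝ e (z - (3 / 4 : ℝ) • e) := by
    rw [inner_sub_right, real_inner_smul_right, real_inner_self_eq_norm_sq, he]; ring
  have hdev : |inner ℝ e (z - (3 / 4 : ℝ) • e)| ≤ ‖z - (3 / 4 : ℝ) • e‖ := by
    simpa [he] using abs_real_inner_le_norm e (z - (3 / 4 : ℝ) • e)
  constructor
  · linarith [norm_sub_norm_le z ((3 / 4 : ℝ) • e)]
  · linarith [neg_abs_le (inner ℝ e (z - (3 / 4 : ℝ) • e))]

theorem setLIntegral_le_setLIntegral_mul_of_le_density {α : Type*} [MeasurableSpace α]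
    {μ ν : Measure α} {s : Set α} (hs : MeasurableSet s) {ρ : α → ℝ≥0∞} (hρ : Measurable ρ)
    (h : ∀ t, MeasurableSet t → t ⊆ s → ν t ≤ ∫⁻ x in t, ρ x ∂μ) (g : α → ℝ≥0∞) :
    ∫⁻ x in s, g x ∂ν ≤ ∫⁻ x in s, ρ x * g x ∂μ := by
  have hle : ν.restrict s ≤ (μ.restrict s).withDensity ρ := Measure.le_intro fun t ht _ => by
    rw [Measure.restrict_apply ht, withDensity_apply _ ht, Measure.restrict_restrict ht]
    exact h _ (ht.inter hs) inter_subset_right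
  exact (lintegral_mono' hle le_rfl).trans (lintegral_withDensity_le_lintegral_mul _ hρ g)

section A2

variable {f : ℝ → ℝ} {r₀ M₁ M₂ β₁ β₂ : ℝ}

def a2Majorant (M₁ M₂ β₁ β₂ t : ℝ) : ℝ := M₂ * t ^ (-β₂) + M₁⁻¹ * t ^ (-β₁)

lemma a2Majorant_nonneg (hM₁ : 0 ≤ M₁) (hM₂ : 0 ≤ M₂) {t : ℝ} (ht : 0 ≤ t) :
    0 ≤ a2Majorant M₁ M₂ β₁ β₂ t := by
  unfold a2Majorant; positivity

lemma le_mul_a2Majorant (hf_pos : ∀ s, 0 < s → s ≤ r₀ → 0 < f s) (hM₁ : 0 < M₁)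
    (hM₂ : 0 ≤ M₂)
    (hA2 : ∀ r R : ℝ, 0 < r → r ≤ R → R ≤ r₀ →
      M₁ * (R / r) ^ β₁ ≤ f r / f R ∧ f r / f R ≤ M₂ * (R / r) ^ β₂)
    {a r : ℝ} (ha : 0 < a) (har₀ : a ≤ r₀) (hr : 0 < r) (hrr₀ : r ≤ r₀) :
    f a ≤ f r * a2Majorant M₁ M₂ β₁ β₂ (a / r) := by
  have hfa := hf_pos a ha har₀
  have hfr := hf_pos r hr hrr₀
  have h₁ : 0 ≤ f r * (M₁⁻¹ * (a / r) ^ (-β₁)) := by positivity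
  have h₂ : 0 ≤ f r * (M₂ * (a / r) ^ (-β₂)) := by positivity
  rw [a2Majorant, mul_add]
  rcases le_total a r with har | hra
  · have h := (hA2 a r ha har hrr₀).2
    rw [div_le_iff₀ hfr, ← inv_div, Real.inv_rpow (by positivity),
      ← Real.rpow_neg (by positivity)] at h
    linarith
  · have h := (hA2 r a hr hra har₀).1
    rw [le_div_iff₀ hfa, ← le_div_iff₀' (by positivity)] at h
    have : f r / (M₁ * (a / r) ^ β₁) = f r * (M₁⁻¹ * (a / r) ^ (-β₁)) := by
      rw [Real.rpow_neg (by positivity), div_eq_mul_inv, mul_inv]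
    linarith

lemma le_apply_mul_pow_of_A2 (hf_pos : ∀ s, 0 < s → s ≤ r₀ → 0 < f s) (hM₁ : 0 ≤ M₁)
    (hβ₁ : (d : ℝ) ≤ β₁)
    (hA2 : ∀ r R : ℝ, 0 < r → r ≤ R → R ≤ r₀ → M₁ * (R / r) ^ β₁ ≤ f r / f R)
    {r : ℝ} (hr : 0 < r) (hrr₀ : r ≤ r₀) :
    M₁ * f r₀ * r₀ ^ d ≤ f r * r ^ d := by
  have hr₀ := hr.trans_le hrr₀
  have hfr₀ := hf_pos r₀ hr₀ le_rfl
  have hpow : (r₀ / r) ^ d ≤ (r₀ / r) ^ β₁ := by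
    rw [← Real.rpow_natCast]
    exact Real.rpow_le_rpow_of_exponent_le ((one_le_div hr).2 hrr₀) hβ₁
  have h := (mul_le_mul_of_nonneg_left hpow hM₁).trans (hA2 r r₀ hr hrr₀ le_rfl)
  rw [le_div_iff₀ hfr₀, div_pow, mul_div_assoc', div_mul_eq_mul_div,
    div_le_iff₀ (by positivity)] at h
  linarith

end A2

section AddHaar

variable {E : Type*} [NormedAddCommGroup E] [NormedSpace ℝ E] [FiniteDimensional ℝ E]
  [MeasurableSpace E] [BorelSpace E] (μ : Measure E) [μ.IsAddHaarMeasure]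

open Module

theorem integrable_min_two_sq_mul_rpow_neg (hE : 1 ≤ finrank ℝ E) {β : ℝ}
    (hβ₁ : finrank ℝ E < β) (hβ₂ : β < finrank ℝ E + 2) :
    Integrable (fun z : E => min 2 (‖z‖ ^ 2) * ‖z‖ ^ (-β)) μ := by
  have hmeas : AEStronglyMeasurable (fun z : E => min 2 (‖z‖ ^ 2) * ‖z‖ ^ (-β)) μ :=
    (by fun_prop : Measurable fun z : E => min 2 (‖z‖ ^ 2) * ‖z‖ ^ (-β)).aestronglyMeasurable
  have hnear : IntegrableOn (fun z : E => min 2 (‖z‖ ^ 2) * ‖z‖ ^ (-β)) (ball 0 1) μ := by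
    refine integrableOn_ball_of_norm_le_rpow hE (C := 1) (α := β - 2) (by linarith)
      (ae_of_all _ fun z => ?_) hmeas
    rcases eq_or_ne z 0 with rfl | hz
    · simp [Real.rpow_nonneg]
    have hz : 0 < ‖z‖ := norm_pos_iff.2 hz
    rw [Real.norm_of_nonneg (by positivity), one_mul, neg_sub, sub_eq_add_neg,
      Real.rpow_add hz, Real.rpow_two]
    gcongr
    exact min_le_right _ _
  have hfar : IntegrableOn (fun z : E => min 2 (‖z‖ ^ 2) * ‖z‖ ^ (-β)) (ball 0 1)ᶜ μ := by
    refine ((integrable_one_add_norm (μ := μ) hβ₁).const_mul (2 * 2 ^ β)).integrableOn.mono'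
      hmeas.restrict (ae_restrict_of_forall_mem measurableSet_ball.compl fun z hz => ?_)
    have hz : 1 ≤ ‖z‖ := by simpa using hz
    have hz0 : 0 < ‖z‖ := one_pos.trans_le hz
    rw [Real.norm_of_nonneg (by positivity)]
    calc min 2 (‖z‖ ^ 2) * ‖z‖ ^ (-β) ≤ 2 * ‖z‖ ^ (-β) := by gcongr; exact min_le_left _ _
      _ = 2 * 2 ^ β * (2 * ‖z‖) ^ (-β) := by
        rw [Real.mul_rpow zero_le_two hz0.le, Real.rpow_neg zero_le_two]
        field_simp
      _ ≤ 2 * 2 ^ β * (1 + ‖z‖) ^ (-β) := by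
        refine mul_le_mul_of_nonneg_left ?_ (by positivity)
        exact Real.rpow_le_rpow_of_nonpos (by positivity) (by linarith) (by linarith)
  simpa using hnear.union hfar

theorem lintegral_ofReal_comp_inv_smul {g : E → ℝ} (hg : Integrable g μ) (hg₀ : 0 ≤ g) {r : ℝ}
    (hr : 0 < r) :
    ∫⁻ y, ENNReal.ofReal (g (r⁻¹ • y)) ∂μ = ENNReal.ofReal (r ^ finrank ℝ E * ∫ z, g z ∂μ) := by
  rw [← smul_eq_mul, ← Measure.integral_comp_inv_smul_of_nonneg μ g hr.le,
    ofReal_integral_eq_lintegral_ofReal (hg.comp_smul (inv_ne_zero hr.ne'))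
      (ae_of_all _ fun y => hg₀ (r⁻¹ • y))]

theorem integrable_min_two_sq_mul_a2Majorant (hE : 1 ≤ finrank ℝ E) {M₁ M₂ β₁ β₂ : ℝ}
    (hβ₁ : finrank ℝ E < β₁) (hβ₁₂ : β₁ ≤ β₂) (hβ₂ : β₂ < finrank ℝ E + 2) :
    Integrable (fun z : E => min 2 (‖z‖ ^ 2) * a2Majorant M₁ M₂ β₁ β₂ ‖z‖) μ := by
  have h₁ := integrable_min_two_sq_mul_rpow_neg μ hE hβ₁ (by linarith)
  have h₂ := integrable_min_two_sq_mul_rpow_neg μ hE (hβ₁.trans_le hβ₁₂) hβ₂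
  refine ((h₂.const_mul M₂).add (h₁.const_mul M₁⁻¹)).congr (ae_of_all _ fun z => ?_)
  simp only [a2Majorant, Pi.add_apply]
  ring

end AddHaar

section Levy

variable {ν : Measure (EuclideanSpace ℝ (Fin d))}

lemma levyPhi_eq_toReal_lintegral (ξ : EuclideanSpace ℝ (Fin d)) :
    levyPhi ν ξ = (∫⁻ y, ENNReal.ofReal (1 - cos (inner ℝ ξ y)) ∂ν).toReal := by
  rw [levyPhi, integral_eq_lintegral_of_nonneg_ae
    (ae_of_all _ fun y => sub_nonneg.2 (cos_le_one _)) (by fun_prop)]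

lemma lintegral_one_sub_cos_le {r : ℝ} (hr : 0 ≤ r) {ξ : EuclideanSpace ℝ (Fin d)}
    (hξ : ‖ξ‖ ≤ r⁻¹) :
    ∫⁻ y, ENNReal.ofReal (1 - cos (inner ℝ ξ y)) ∂ν ≤
      ∫⁻ y, ENNReal.ofReal (min 2 (‖r⁻¹ • y‖ ^ 2)) ∂ν := by
  refine lintegral_mono fun y => ENNReal.ofReal_le_ofReal ?_
  have hinner : |inner ℝ ξ y| ≤ ‖r⁻¹ • y‖ := by
    rw [norm_smul, Real.norm_of_nonneg (inv_nonneg.2 hr)]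
    exact (abs_real_inner_le_norm ξ y).trans (by gcongr)
  refine (one_sub_cos_le_min_two_sq _).trans (min_le_min le_rfl ?_)
  simpa only [sq_abs] using pow_le_pow_left₀ (abs_nonneg _) hinner 2

lemma levyPsi_le {R B : ℝ} (hR : 0 ≤ R) (h : ∀ ξ, ‖ξ‖ ≤ R → levyPhi ν ξ ≤ B) :
    levyPsi ν R ≤ B :=
  csSup_le ⟨_, 0, by simpa using hR, rfl⟩ (forall_mem_image.2 h)

lemma levyPhi_le_levyPsi {R B : ℝ} (h : ∀ ξ, ‖ξ‖ ≤ R → levyPhi ν ξ ≤ B)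
    {ξ : EuclideanSpace ℝ (Fin d)} (hξ : ‖ξ‖ ≤ R) : levyPhi ν ξ ≤ levyPsi ν R :=
  le_csSup ⟨B, forall_mem_image.2 h⟩ (mem_image_of_mem _ hξ)

end Levy

section LevyDensity

open scoped Pointwise

variable {ν : Measure (EuclideanSpace ℝ (Fin d))} {r₀ : ℝ}
  {νb : EuclideanSpace ℝ (Fin d) → ℝ} {f : ℝ → ℝ}

lemma ofReal_mul_volume_le_lintegral_one_sub_cos
    (hac : ∀ A : Set (EuclideanSpace ℝ (Fin d)), MeasurableSet A → A ⊆ ball 0 r₀ →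
      ν A = ∫⁻ x in A, ENNReal.ofReal (νb x))
    (hf_anti : ∀ s u : ℝ, 0 < s → s ≤ u → u ≤ r₀ → f u ≤ f s) {m₁ : ℝ} (hm₁ : 0 ≤ m₁)
    (hlow : ∀ x : EuclideanSpace ℝ (Fin d), 0 < ‖x‖ → ‖x‖ < r₀ → m₁ * f ‖x‖ ≤ νb x)
    {e : EuclideanSpace ℝ (Fin d)} (he : ‖e‖ = 1) {r : ℝ} (hr : 0 < r) (hrr₀ : r < r₀)
    (hfr : 0 ≤ f r) :
    ENNReal.ofReal (m₁ * f r * r ^ d / (2 * π ^ 2)) * volume (ball ((3 / 4 : ℝ) • e) (1 / 4)) ≤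
      ∫⁻ y, ENNReal.ofReal (1 - cos (inner ℝ (r⁻¹ • e) y)) ∂ν := by
  set S := ball ((3 / 4 : ℝ) • e) (1 / 4)
  have hS : MeasurableSet (r • S) := (isOpen_ball.smul₀ hr.ne').measurableSet
  have hmem : ∀ y ∈ r • S,
      0 < ‖y‖ ∧ ‖y‖ < r ∧ 1 / 2 < inner ℝ (r⁻¹ • e) y ∧ inner ℝ (r⁻¹ • e) y < 1 := by
    rintro _ ⟨z, hz, rfl⟩
    obtain ⟨hz₁, hz₂⟩ := norm_lt_one_and_half_lt_inner_of_mem_ball he hz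
    have hz₀ : z ≠ 0 := by rintro rfl; norm_num at hz₂
    rw [real_inner_smul_left, real_inner_smul_right, inv_mul_cancel_left₀ hr.ne', norm_smul,
      Real.norm_of_nonneg hr.le]
    exact ⟨by positivity, by nlinarith, hz₂,
      (real_inner_le_norm e z).trans_lt (by rwa [he, one_mul])⟩
  have hcos : ∀ y ∈ r • S,
      ENNReal.ofReal (1 / (2 * π ^ 2)) ≤ ENNReal.ofReal (1 - cos (inner ℝ (r⁻¹ • e) y)) := by
    intro y hy
    obtain ⟨-, -, h₁, h₂⟩ := hmem y hy
    exact ENNReal.ofReal_le_ofReal (inv_two_mul_pi_sq_le_one_sub_cos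
      (h₁.le.trans (le_abs_self _)) (abs_le.2 ⟨by linarith, h₂.le⟩))
  have hmass : ENNReal.ofReal (m₁ * f r) * volume (r • S) ≤ ν (r • S) := by
    rw [hac _ hS fun y hy => mem_ball_zero_iff.2 ((hmem y hy).2.1.trans hrr₀),
      ← setLIntegral_const]
    refine setLIntegral_mono' hS fun y hy => ENNReal.ofReal_le_ofReal ?_
    obtain ⟨hy₀, hyr, -⟩ := hmem y hy
    exact (mul_le_mul_of_nonneg_left (hf_anti _ _ hy₀ hyr.le hrr₀.le) hm₁).trans
      (hlow y hy₀ (hyr.trans hrr₀))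
  calc ENNReal.ofReal (m₁ * f r * r ^ d / (2 * π ^ 2)) * volume S
      = ENNReal.ofReal (1 / (2 * π ^ 2)) * (ENNReal.ofReal (m₁ * f r) * volume (r • S)) := by
        rw [Measure.addHaar_smul_of_nonneg _ hr.le, finrank_euclideanSpace_fin, ← mul_assoc,
          ← mul_assoc, ← ENNReal.ofReal_mul (by positivity),
          ← ENNReal.ofReal_mul (mul_nonneg (by positivity) (mul_nonneg hm₁ hfr))]
        congr 2
        ring
    _ ≤ ENNReal.ofReal (1 / (2 * π ^ 2)) * ν (r • S) := by gcongr
    _ = ∫⁻ _ in r • S, ENNReal.ofReal (1 / (2 * π ^ 2)) ∂ν := (setLIntegral_const _ _).symm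
    _ ≤ ∫⁻ y in r • S, ENNReal.ofReal (1 - cos (inner ℝ (r⁻¹ • e) y)) ∂ν :=
        setLIntegral_mono' hS hcos
    _ ≤ ∫⁻ y, ENNReal.ofReal (1 - cos (inner ℝ (r⁻¹ • e) y)) ∂ν := setLIntegral_le_lintegral _ _

lemma setLIntegral_compl_punctured_ball_min_two_sq_le (hr₀ : 0 < r₀) (r : ℝ) :
    ∫⁻ y in (ball (0 : EuclideanSpace ℝ (Fin d)) r₀ \ {0})ᶜ,
        ENNReal.ofReal (min 2 (‖r⁻¹ • y‖ ^ 2)) ∂ν ≤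
      ENNReal.ofReal (2 / min 1 (r₀ ^ 2)) * ∫⁻ y, ENNReal.ofReal (min 1 (‖y‖ ^ 2)) ∂ν := by
  have hs : MeasurableSet (ball (0 : EuclideanSpace ℝ (Fin d)) r₀ \ {0}) :=
    measurableSet_ball.diff (measurableSet_singleton 0)
  have hmin : 0 < min 1 (r₀ ^ 2) := by positivity
  calc ∫⁻ y in (ball 0 r₀ \ {0})ᶜ, ENNReal.ofReal (min 2 (‖r⁻¹ • y‖ ^ 2)) ∂ν
      ≤ ∫⁻ y in (ball 0 r₀ \ {0})ᶜ,
          ENNReal.ofReal (2 / min 1 (r₀ ^ 2)) * ENNReal.ofReal (min 1 (‖y‖ ^ 2)) ∂ν := by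
        refine setLIntegral_mono' hs.compl fun y hy => ?_
        rcases eq_or_ne y 0 with rfl | hy₀
        · simp
        have hy : r₀ ≤ ‖y‖ := by simpa [hy₀] using hy
        rw [← ENNReal.ofReal_mul (by positivity)]
        refine ENNReal.ofReal_le_ofReal ((min_le_left _ _).trans ?_)
        calc (2 : ℝ) = 2 / min 1 (r₀ ^ 2) * min 1 (r₀ ^ 2) := by field_simp
          _ ≤ 2 / min 1 (r₀ ^ 2) * min 1 (‖y‖ ^ 2) := by gcongr
    _ ≤ ∫⁻ y, ENNReal.ofReal (2 / min 1 (r₀ ^ 2)) * ENNReal.ofReal (min 1 (‖y‖ ^ 2)) ∂ν :=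
        setLIntegral_le_lintegral _ _
    _ = ENNReal.ofReal (2 / min 1 (r₀ ^ 2)) * ∫⁻ y, ENNReal.ofReal (min 1 (‖y‖ ^ 2)) ∂ν :=
        lintegral_const_mul' _ _ ENNReal.ofReal_ne_top

lemma setLIntegral_punctured_ball_min_two_sq_le
    (hac : ∀ A : Set (EuclideanSpace ℝ (Fin d)), MeasurableSet A → A ⊆ ball 0 r₀ →
      ν A = ∫⁻ x in A, ENNReal.ofReal (νb x))
    (hf_pos : ∀ s, 0 < s → s ≤ r₀ → 0 < f s) {M₁ M₂ β₁ β₂ : ℝ} (hM₁ : 0 < M₁) (hM₂ : 0 ≤ M₂)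
    (hA2 : ∀ r R : ℝ, 0 < r → r ≤ R → R ≤ r₀ →
      M₁ * (R / r) ^ β₁ ≤ f r / f R ∧ f r / f R ≤ M₂ * (R / r) ^ β₂)
    {m₂ : ℝ} (hm₂ : 0 ≤ m₂)
    (hupp : ∀ x : EuclideanSpace ℝ (Fin d), 0 < ‖x‖ → ‖x‖ < r₀ → νb x ≤ m₂ * f ‖x‖)
    (hG : Integrable fun z : EuclideanSpace ℝ (Fin d) =>
      min 2 (‖z‖ ^ 2) * a2Majorant M₁ M₂ β₁ β₂ ‖z‖)
    {r : ℝ} (hr : 0 < r) (hrr₀ : r ≤ r₀) :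
    ∫⁻ y in ball (0 : EuclideanSpace ℝ (Fin d)) r₀ \ {0},
        ENNReal.ofReal (min 2 (‖r⁻¹ • y‖ ^ 2)) ∂ν ≤
      ENNReal.ofReal (m₂ * f r * (r ^ d *
        ∫ z : EuclideanSpace ℝ (Fin d), min 2 (‖z‖ ^ 2) * a2Majorant M₁ M₂ β₁ β₂ ‖z‖)) := by
  have hs : MeasurableSet (ball (0 : EuclideanSpace ℝ (Fin d)) r₀ \ {0}) :=
    measurableSet_ball.diff (measurableSet_singleton 0)
  have hfr := hf_pos r hr hrr₀
  set ρ : EuclideanSpace ℝ (Fin d) → ℝ≥0∞ :=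
    fun y => ENNReal.ofReal (m₂ * f r * a2Majorant M₁ M₂ β₁ β₂ ‖r⁻¹ • y‖)
  have hρ : Measurable ρ := by unfold ρ a2Majorant; fun_prop
  -- `νb` need not be measurable, so `ν` is dominated by the measurable density `ρ` instead.
  have hdensity : ∀ t, MeasurableSet t → t ⊆ ball 0 r₀ \ {0} → ν t ≤ ∫⁻ y in t, ρ y := by
    intro t ht hts
    rw [hac t ht (hts.trans sdiff_subset)]
    refine setLIntegral_mono hρ fun y hy => ENNReal.ofReal_le_ofReal ?_
    obtain ⟨hyr₀, hy₀⟩ := hts hy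
    have hy : 0 < ‖y‖ := norm_pos_iff.2 hy₀
    have hyr₀ : ‖y‖ < r₀ := mem_ball_zero_iff.1 hyr₀
    calc νb y ≤ m₂ * f ‖y‖ := hupp y hy hyr₀
      _ ≤ m₂ * (f r * a2Majorant M₁ M₂ β₁ β₂ (‖y‖ / r)) :=
        mul_le_mul_of_nonneg_left
          (le_mul_a2Majorant hf_pos hM₁ hM₂ hA2 hy hyr₀.le hr hrr₀) hm₂
      _ = m₂ * f r * a2Majorant M₁ M₂ β₁ β₂ ‖r⁻¹ • y‖ := by
        rw [norm_smul, Real.norm_of_nonneg (inv_nonneg.2 hr.le), inv_mul_eq_div, mul_assoc]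
  have hprod : ∀ y, ρ y * ENNReal.ofReal (min 2 (‖r⁻¹ • y‖ ^ 2)) = ENNReal.ofReal (m₂ * f r) *
      ENNReal.ofReal (min 2 (‖r⁻¹ • y‖ ^ 2) * a2Majorant M₁ M₂ β₁ β₂ ‖r⁻¹ • y‖) := by
    intro y
    rw [show ρ y = _ from ENNReal.ofReal_mul (mul_nonneg hm₂ hfr.le),
      ENNReal.ofReal_mul (le_min zero_le_two (sq_nonneg _))]
    ring
  calc ∫⁻ y in ball 0 r₀ \ {0}, ENNReal.ofReal (min 2 (‖r⁻¹ • y‖ ^ 2)) ∂ν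
      ≤ ∫⁻ y in ball 0 r₀ \ {0}, ρ y * ENNReal.ofReal (min 2 (‖r⁻¹ • y‖ ^ 2)) :=
        setLIntegral_le_setLIntegral_mul_of_le_density hs hρ hdensity _
    _ ≤ ∫⁻ y, ρ y * ENNReal.ofReal (min 2 (‖r⁻¹ • y‖ ^ 2)) := setLIntegral_le_lintegral _ _
    _ = ENNReal.ofReal (m₂ * f r) * ENNReal.ofReal (r ^ d *
          ∫ z : EuclideanSpace ℝ (Fin d), min 2 (‖z‖ ^ 2) * a2Majorant M₁ M₂ β₁ β₂ ‖z‖) := by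
        simp_rw [hprod]
        rw [lintegral_const_mul' _ _ ENNReal.ofReal_ne_top,
          lintegral_ofReal_comp_inv_smul _ hG
            (fun z => mul_nonneg (le_min zero_le_two (sq_nonneg _))
              (a2Majorant_nonneg hM₁.le hM₂ (norm_nonneg z))) hr,
          finrank_euclideanSpace_fin]
    _ = _ := (ENNReal.ofReal_mul (by positivity)).symm

lemma exists_lintegral_min_two_sq_le (hd : 1 ≤ d) (hr₀ : 0 < r₀)
    (hac : ∀ A : Set (EuclideanSpace ℝ (Fin d)), MeasurableSet A → A ⊆ ball 0 r₀ →
      ν A = ∫⁻ x in A, ENNReal.ofReal (νb x))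
    (hL : ∫⁻ y, ENNReal.ofReal (min 1 (‖y‖ ^ 2)) ∂ν < ⊤)
    (hf_pos : ∀ s, 0 < s → s ≤ r₀ → 0 < f s) {M₁ M₂ β₁ β₂ : ℝ} (hM₁ : 0 < M₁) (hM₂ : 0 ≤ M₂)
    (hβ₁ : (d : ℝ) < β₁) (hβ₁₂ : β₁ ≤ β₂) (hβ₂ : β₂ < (d : ℝ) + 2)
    (hA2 : ∀ r R : ℝ, 0 < r → r ≤ R → R ≤ r₀ →
      M₁ * (R / r) ^ β₁ ≤ f r / f R ∧ f r / f R ≤ M₂ * (R / r) ^ β₂)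
    {m₂ : ℝ} (hm₂ : 0 ≤ m₂)
    (hupp : ∀ x : EuclideanSpace ℝ (Fin d), 0 < ‖x‖ → ‖x‖ < r₀ → νb x ≤ m₂ * f ‖x‖) :
    ∃ C, 0 < C ∧ ∀ r, 0 < r → r ≤ r₀ →
      ∫⁻ y, ENNReal.ofReal (min 2 (‖r⁻¹ • y‖ ^ 2)) ∂ν ≤ ENNReal.ofReal (C * (f r * r ^ d)) := by
  have hG := integrable_min_two_sq_mul_a2Majorant (volume : Measure (EuclideanSpace ℝ (Fin d)))
    (M₁ := M₁) (M₂ := M₂) (by simpa using hd) (by simpa using hβ₁) hβ₁₂ (by simpa using hβ₂)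
  set I := ∫ z : EuclideanSpace ℝ (Fin d), min 2 (‖z‖ ^ 2) * a2Majorant M₁ M₂ β₁ β₂ ‖z‖
  have hI : 0 ≤ I := integral_nonneg fun z => mul_nonneg (le_min zero_le_two (sq_nonneg _))
    (a2Majorant_nonneg hM₁.le hM₂ (norm_nonneg z))
  set K := (ENNReal.ofReal (2 / min 1 (r₀ ^ 2)) * ∫⁻ y, ENNReal.ofReal (min 1 (‖y‖ ^ 2)) ∂ν).toReal
  have hK : 0 ≤ K := ENNReal.toReal_nonneg
  set δ := M₁ * f r₀ * r₀ ^ d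
  have hδ : 0 < δ := by have := hf_pos r₀ hr₀ le_rfl; positivity
  refine ⟨m₂ * I + K / δ + 1, by positivity, fun r hr hrr₀ => ?_⟩
  have hfr := hf_pos r hr hrr₀
  have hδX : δ ≤ f r * r ^ d := le_apply_mul_pow_of_A2 hf_pos hM₁.le hβ₁.le
    (fun r R h₁ h₂ h₃ => (hA2 r R h₁ h₂ h₃).1) hr hrr₀
  have hKX : K ≤ K / δ * (f r * r ^ d) := by
    rw [div_mul_eq_mul_div, le_div_iff₀ hδ]; gcongr
  have hs : MeasurableSet (ball (0 : EuclideanSpace ℝ (Fin d)) r₀ \ {0}) :=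
    measurableSet_ball.diff (measurableSet_singleton 0)
  calc ∫⁻ y, ENNReal.ofReal (min 2 (‖r⁻¹ • y‖ ^ 2)) ∂ν
      = (∫⁻ y in ball 0 r₀ \ {0}, ENNReal.ofReal (min 2 (‖r⁻¹ • y‖ ^ 2)) ∂ν) +
          ∫⁻ y in (ball 0 r₀ \ {0})ᶜ, ENNReal.ofReal (min 2 (‖r⁻¹ • y‖ ^ 2)) ∂ν :=
        (lintegral_add_compl _ hs).symm
    _ ≤ ENNReal.ofReal (m₂ * f r * (r ^ d * I)) + ENNReal.ofReal K := by
        refine add_le_add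
          (setLIntegral_punctured_ball_min_two_sq_le hac hf_pos hM₁ hM₂ hA2 hm₂ hupp hG hr hrr₀) ?_
        rw [ENNReal.ofReal_toReal (ENNReal.mul_ne_top ENNReal.ofReal_ne_top hL.ne)]
        exact setLIntegral_compl_punctured_ball_min_two_sq_le hr₀ r
    _ ≤ ENNReal.ofReal ((m₂ * I + K / δ + 1) * (f r * r ^ d)) := by
        rw [← ENNReal.ofReal_add (by positivity) hK]
        refine ENNReal.ofReal_le_ofReal ?_
        have hX : 0 < f r * r ^ d := by positivity
        nlinarith

theorem exists_levyPsi_inv_comparable (hd : 1 ≤ d) (hr₀ : 0 < r₀)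
    (hac : ∀ A : Set (EuclideanSpace ℝ (Fin d)), MeasurableSet A → A ⊆ ball 0 r₀ →
      ν A = ∫⁻ x in A, ENNReal.ofReal (νb x))
    (hL : ∫⁻ y, ENNReal.ofReal (min 1 (‖y‖ ^ 2)) ∂ν < ⊤)
    (hf_pos : ∀ s, 0 < s → s ≤ r₀ → 0 < f s)
    (hf_anti : ∀ s u : ℝ, 0 < s → s ≤ u → u ≤ r₀ → f u ≤ f s)
    {M₁ M₂ β₁ β₂ : ℝ} (hM₁ : 0 < M₁) (hM₂ : 0 ≤ M₂)
    (hβ₁ : (d : ℝ) < β₁) (hβ₁₂ : β₁ ≤ β₂) (hβ₂ : β₂ < (d : ℝ) + 2)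
    (hA2 : ∀ r R : ℝ, 0 < r → r ≤ R → R ≤ r₀ →
      M₁ * (R / r) ^ β₁ ≤ f r / f R ∧ f r / f R ≤ M₂ * (R / r) ^ β₂)
    {m₁ m₂ : ℝ} (hm₁ : 0 < m₁) (hm₂ : 0 ≤ m₂)
    (hlow : ∀ x : EuclideanSpace ℝ (Fin d), 0 < ‖x‖ → ‖x‖ < r₀ → m₁ * f ‖x‖ ≤ νb x)
    (hupp : ∀ x : EuclideanSpace ℝ (Fin d), 0 < ‖x‖ → ‖x‖ < r₀ → νb x ≤ m₂ * f ‖x‖) :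
    ∃ c C : ℝ, 0 < c ∧ 0 < C ∧ ∀ r, 0 < r → r < r₀ →
      c * (f r * r ^ d) ≤ levyPsi ν r⁻¹ ∧ levyPsi ν r⁻¹ ≤ C * (f r * r ^ d) := by
  obtain ⟨C, hC, hupper⟩ := exists_lintegral_min_two_sq_le hd hr₀ hac hL hf_pos hM₁ hM₂ hβ₁ hβ₁₂
    hβ₂ hA2 hm₂ hupp
  set e : EuclideanSpace ℝ (Fin d) := EuclideanSpace.single ⟨0, hd⟩ 1
  have he : ‖e‖ = 1 := by simp [e]
  set S := ball ((3 / 4 : ℝ) • e) (1 / 4)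
  have hS : 0 < (volume S).toReal :=
    ENNReal.toReal_pos (measure_ball_pos _ _ (by norm_num)).ne' measure_ball_lt_top.ne
  refine ⟨m₁ * (volume S).toReal / (2 * π ^ 2), C, by positivity, hC, fun r hr hrr₀ => ?_⟩
  have hfr := hf_pos r hr hrr₀.le
  have hbound : ∀ ξ : EuclideanSpace ℝ (Fin d), ‖ξ‖ ≤ r⁻¹ →
      ∫⁻ y, ENNReal.ofReal (1 - cos (inner ℝ ξ y)) ∂ν ≤ ENNReal.ofReal (C * (f r * r ^ d)) :=
    fun ξ hξ => (lintegral_one_sub_cos_le hr.le hξ).trans (hupper r hr hrr₀.le)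
  have hPhi : ∀ ξ : EuclideanSpace ℝ (Fin d), ‖ξ‖ ≤ r⁻¹ → levyPhi ν ξ ≤ C * (f r * r ^ d) :=
    fun ξ hξ => by
      rw [levyPhi_eq_toReal_lintegral]
      exact ENNReal.toReal_le_of_le_ofReal (by positivity) (hbound ξ hξ)
  have hnorm : ‖r⁻¹ • e‖ ≤ r⁻¹ := by
    rw [norm_smul, he, Real.norm_of_nonneg (inv_nonneg.2 hr.le), mul_one]
  refine ⟨?_, levyPsi_le (inv_nonneg.2 hr.le) hPhi⟩
  calc m₁ * (volume S).toReal / (2 * π ^ 2) * (f r * r ^ d)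
      = (ENNReal.ofReal (m₁ * f r * r ^ d / (2 * π ^ 2)) * volume S).toReal := by
        rw [ENNReal.toReal_mul, ENNReal.toReal_ofReal (by positivity)]; ring
    _ ≤ (∫⁻ y, ENNReal.ofReal (1 - cos (inner ℝ (r⁻¹ • e) y)) ∂ν).toReal :=
        ENNReal.toReal_mono ((hbound _ hnorm).trans_lt ENNReal.ofReal_lt_top).ne
          (ofReal_mul_volume_le_lintegral_one_sub_cos hac hf_anti hm₁.le hlow he hr hrr₀ hfr.le)
    _ = levyPhi ν (r⁻¹ • e) := (levyPhi_eq_toReal_lintegral _).symm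
    _ ≤ levyPsi ν r⁻¹ := levyPhi_le_levyPsi hPhi hnorm

end LevyDensity

theorem statement17_general (hd : 1 ≤ d)
    (ν : Measure (EuclideanSpace ℝ (Fin d))) (hν : IsSymLevy ν)
    (r₀ : ℝ) (hr₀ : 0 < r₀)
    (νb : EuclideanSpace ℝ (Fin d) → ℝ)
    (hac : ∀ A : Set (EuclideanSpace ℝ (Fin d)), MeasurableSet A → A ⊆ Metric.ball (0 : EuclideanSpace ℝ (Fin d)) r₀ →
      ν A = ∫⁻ x in A, ENNReal.ofReal (νb x))
    (f : ℝ → ℝ)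
    (hf_pos : ∀ s : ℝ, 0 < s → s ≤ r₀ → 0 < f s)
    (hf_anti : ∀ s u : ℝ, 0 < s → s ≤ u → u ≤ r₀ → f u ≤ f s)
    (hA2 : CondA2 d f r₀)
    (m₁ m₂ : ℝ) (hm₁ : 0 < m₁) (hm₂ : 0 < m₂)
    (hcomp : ∀ x : EuclideanSpace ℝ (Fin d), 0 < ‖x‖ → ‖x‖ < r₀ →
      m₁ * f ‖x‖ ≤ νb x ∧ νb x ≤ m₂ * f ‖x‖) :
    ∃ c C : ℝ, 0 < c ∧ c ≤ C ∧ ∀ x : EuclideanSpace ℝ (Fin d), 0 < ‖x‖ → ‖x‖ < r₀ →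
      c * levyPsi ν (1 / ‖x‖) / ‖x‖ ^ d ≤ νb x ∧
      νb x ≤ C * levyPsi ν (1 / ‖x‖) / ‖x‖ ^ d := by
  obtain ⟨M₁, M₂, β₁, β₂, hM₁, hM₂, hβ₁, hβ₁₂, hβ₂, hA2⟩ := hA2
  obtain ⟨c, C, hc, hC, hPsi⟩ := exists_levyPsi_inv_comparable hd hr₀ hac hν.levy_integral hf_pos
    hf_anti hM₁ hM₂.le hβ₁ hβ₁₂ hβ₂ hA2 hm₁ hm₂.le (fun x hx hxr => (hcomp x hx hxr).1)
    (fun x hx hxr => (hcomp x hx hxr).2)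
  refine ⟨min (m₁ / C) (m₂ / c), m₂ / c, by positivity, min_le_right _ _, fun x hx hxr => ?_⟩
  obtain ⟨hlo, hhi⟩ := hPsi ‖x‖ hx hxr
  obtain ⟨hνb₁, hνb₂⟩ := hcomp x hx hxr
  have hfx := hf_pos ‖x‖ hx hxr.le
  rw [one_div]
  constructor
  · rw [div_le_iff₀ (by positivity)]
    calc min (m₁ / C) (m₂ / c) * levyPsi ν ‖x‖⁻¹ ≤ m₁ / C * (C * (f ‖x‖ * ‖x‖ ^ d)) :=
          mul_le_mul (min_le_left _ _) hhi ((by positivity : (0 : ℝ) ≤ _).trans hlo)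
            (by positivity)
      _ = m₁ * f ‖x‖ * ‖x‖ ^ d := by field_simp
      _ ≤ νb x * ‖x‖ ^ d := by gcongr
  · rw [le_div_iff₀ (by positivity)]
    calc νb x * ‖x‖ ^ d ≤ m₂ * f ‖x‖ * ‖x‖ ^ d := by gcongr
      _ = m₂ / c * (c * (f ‖x‖ * ‖x‖ ^ d)) := by field_simp
      _ ≤ m₂ / c * levyPsi ν ‖x‖⁻¹ := by gcongr

theorem statement17 (hd : 1 ≤ d)
    (ν : Measure (EuclideanSpace ℝ (Fin d))) (hν : IsSymLevy ν)
    (r₀ : ℝ) (hr₀ : 0 < r₀)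
    (νb : EuclideanSpace ℝ (Fin d) → ℝ)
    (hac : ∀ A : Set (EuclideanSpace ℝ (Fin d)), MeasurableSet A → A ⊆ Metric.ball (0 : EuclideanSpace ℝ (Fin d)) r₀ →
      ν A = ∫⁻ x in A, ENNReal.ofReal (νb x))
    (f : ℝ → ℝ)
    (hf_pos : ∀ s : ℝ, 0 < s → s ≤ r₀ → 0 < f s)
    (hf_anti : ∀ s u : ℝ, 0 < s → s ≤ u → u ≤ r₀ → f u ≤ f s)
    (hA2 : CondA2 d f r₀)
    (hκ : ∃ κ : ℝ, 0 < κ ∧ ∀ s : ℝ, 0 < s → s ≤ r₀ → κ ≤ f s)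
    (m₁ m₂ : ℝ) (hm₁ : 0 < m₁) (hm₂ : 0 < m₂)
    (hcomp : ∀ x : EuclideanSpace ℝ (Fin d), 0 < ‖x‖ → ‖x‖ < r₀ →
      m₁ * f ‖x‖ ≤ νb x ∧ νb x ≤ m₂ * f ‖x‖) :
    ∃ c C : ℝ, 0 < c ∧ c ≤ C ∧ ∀ x : EuclideanSpace ℝ (Fin d), 0 < ‖x‖ → ‖x‖ < r₀ →
      c * levyPsi ν (1 / ‖x‖) / ‖x‖ ^ d ≤ νb x ∧
      νb x ≤ C * levyPsi ν (1 / ‖x‖) / ‖x‖ ^ d :=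
  statement17_general hd ν hν r₀ hr₀ νb hac f hf_pos hf_anti hA2 m₁ m₂ hm₁ hm₂ hcomp
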